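/- arXiv:2602.01209 — 3 statements merged into one kernel-verified Lean document; each statement's English description precedes it below -/
import Mathlib

section
/- For the interval transportation problem with interval cost matrix [C̲, C̄], interval supplies [s̲, s̄] and interval demands [d̲, d̄] (all non-negative), the best optimal value over all feasible scenarios equals f(C̲, s̄, d̲), i.e., it is attained at the scenario with lowest costs, largest supplies and smallest demands, provided this scenario is feasible (sum_i s̄_i >= sum_j d̲_j). -/
open Finset

/-- A feasible transportation plan for supplies `s` and demands `d`. -/
def IsPlan {m n : ℕ} (s : Fin m → ℝ) (d : Fin n → ℝ) (x : Fin m → Fin n → ℝ) : Prop :=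
  (∀ i j, 0 ≤ x i j) ∧ (∀ i, ∑ j, x i j ≤ s i) ∧ (∀ j, ∑ i, x i j = d j)

/-- Total transportation cost of a plan `x` under cost matrix `C`. -/
def cost {m n : ℕ} (C x : Fin m → Fin n → ℝ) : ℝ :=
  ∑ i, ∑ j, C i j * x i j

/-- Optimal value of the transportation problem with data `(C, s, d)`. -/
noncomputable def optVal {m n : ℕ} (C : Fin m → Fin n → ℝ) (s : Fin m → ℝ)
    (d : Fin n → ℝ) : ℝ :=
  sInf (cost C '' {x | IsPlan s d x})

/-! Lowering costs can only lower the cost of a fixed plan, raising supplies keeps every plan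
feasible, and lowering demands lets one shrink each column `j` of a plan by the factor
`d̲ⱼ / dⱼ ≤ 1`, which with non-negative costs does not increase the cost. Hence every feasible
scenario `(C, s, d)` has optimal value at least `f(C̲, s̄, d̲)`, and that scenario is itself
feasible. -/

variable {m n : ℕ}

/-- The proportional plan `xᵢⱼ = sᵢ · dⱼ / ∑ₖ sₖ`. -/
lemma exists_isPlan {s : Fin m → ℝ} {d : Fin n → ℝ} (hs : ∀ i, 0 ≤ s i) (hd : ∀ j, 0 ≤ d j)
    (hsd : ∑ j, d j ≤ ∑ i, s i) : ∃ x, IsPlan s d x := by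
  set S := ∑ i, s i
  have hS : 0 ≤ S := sum_nonneg fun i _ => hs i
  refine ⟨fun i j => s i * (d j / S), fun i j => mul_nonneg (hs i) (div_nonneg (hd j) hS),
    fun i => ?_, fun j => ?_⟩
  · rw [← mul_sum, ← sum_div]
    exact mul_le_of_le_one_right (hs i) (div_le_one_of_le₀ hsd hS)
  · rw [← sum_mul]
    rcases hS.eq_or_lt with hS0 | hSpos
    · have hdj : d j = 0 :=
        le_antisymm ((single_le_sum (fun j _ => hd j) (mem_univ j)).trans (hS0 ▸ hsd)) (hd j)
      simp [hdj]
    · exact mul_div_cancel₀ _ hSpos.ne'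

lemma IsPlan.mono_supply {s s' : Fin m → ℝ} {d : Fin n → ℝ} {x : Fin m → Fin n → ℝ}
    (hx : IsPlan s d x) (hs : ∀ i, s i ≤ s' i) : IsPlan s' d x :=
  ⟨hx.1, fun i => (hx.2.1 i).trans (hs i), hx.2.2⟩

/-- Shrinking column `j` by the factor `d' j / d j`; a zero column stays zero (`d' j / 0 = 0`). -/
lemma IsPlan.exists_le_of_demand_le {s : Fin m → ℝ} {d d' : Fin n → ℝ}
    {x : Fin m → Fin n → ℝ} (hx : IsPlan s d x) (hd' : ∀ j, 0 ≤ d' j) (hd : ∀ j, d' j ≤ d j) :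
    ∃ y, IsPlan s d' y ∧ (∀ i j, y i j ≤ x i j) := by
  obtain ⟨hx0, hxs, hxd⟩ := hx
  have hratio : ∀ j, 0 ≤ d' j / d j ∧ d' j / d j ≤ 1 := fun j =>
    ⟨div_nonneg (hd' j) ((hd' j).trans (hd j)), div_le_one_of_le₀ (hd j) ((hd' j).trans (hd j))⟩
  have hyx : ∀ i j, x i j * (d' j / d j) ≤ x i j := fun i j =>
    mul_le_of_le_one_right (hx0 i j) (hratio j).2
  refine ⟨fun i j => x i j * (d' j / d j), ⟨fun i j => mul_nonneg (hx0 i j) (hratio j).1,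
    fun i => ((sum_le_sum fun j _ => hyx i j).trans (hxs i)), fun j => ?_⟩, hyx⟩
  rw [← sum_mul, hxd j]
  rcases eq_or_ne (d j) 0 with hdj | hdj
  · simp [le_antisymm (hdj ▸ hd j) (hd' j), hdj]
  · exact mul_div_cancel₀ _ hdj

lemma cost_le_cost {C C' x x' : Fin m → Fin n → ℝ} (hC : ∀ i j, 0 ≤ C i j)
    (hCC' : ∀ i j, C i j ≤ C' i j) (hx : ∀ i j, 0 ≤ x i j) (hxx' : ∀ i j, x i j ≤ x' i j) :
    cost C x ≤ cost C' x' :=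
  sum_le_sum fun i _ => sum_le_sum fun j _ =>
    mul_le_mul (hCC' i j) (hxx' i j) (hx i j) ((hC i j).trans (hCC' i j))

lemma bddBelow_cost_image {C : Fin m → Fin n → ℝ} (hC : ∀ i j, 0 ≤ C i j) (s : Fin m → ℝ)
    (d : Fin n → ℝ) : BddBelow (cost C '' {x | IsPlan s d x}) := by
  refine ⟨0, ?_⟩
  rintro _ ⟨x, hx, rfl⟩
  simpa [cost] using cost_le_cost (fun _ _ => le_rfl) hC (fun _ _ => le_rfl) hx.1

lemma optVal_le_optVal {C C' : Fin m → Fin n → ℝ} {s s' : Fin m → ℝ} {d d' : Fin n → ℝ}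
    (hC : ∀ i j, 0 ≤ C i j) (hCC' : ∀ i j, C i j ≤ C' i j) (hss' : ∀ i, s' i ≤ s i)
    (hd : ∀ j, 0 ≤ d j) (hdd' : ∀ j, d j ≤ d' j) (hfeas : ∃ x, IsPlan s' d' x) :
    optVal C s d ≤ optVal C' s' d' := by
  obtain ⟨x₀, hx₀⟩ := hfeas
  refine le_csInf ⟨_, x₀, hx₀, rfl⟩ ?_
  rintro _ ⟨x, hx, rfl⟩
  obtain ⟨y, hy, hyx⟩ := hx.exists_le_of_demand_le hd hdd'
  calc optVal C s d ≤ cost C y :=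
        csInf_le (bddBelow_cost_image hC s d) ⟨y, hy.mono_supply hss', rfl⟩
    _ ≤ cost C' x := cost_le_cost hC hCC' hy.1 hyx

/-- The best optimal value of the interval transportation problem is attained at
the scenario with lowest costs, largest supplies and smallest demands. -/
theorem best_optimal_value {m n : ℕ} (Cl Cu : Fin m → Fin n → ℝ)
    (sl su : Fin m → ℝ) (dl du : Fin n → ℝ)
    (hCl : ∀ i j, 0 ≤ Cl i j) (hC : ∀ i j, Cl i j ≤ Cu i j)
    (hsl : ∀ i, 0 ≤ sl i) (hs : ∀ i, sl i ≤ su i)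
    (hdl : ∀ j, 0 ≤ dl j) (hd : ∀ j, dl j ≤ du j)
    (hfeas : ∑ j, dl j ≤ ∑ i, su i) :
    IsLeast {v | ∃ (C : Fin m → Fin n → ℝ) (s : Fin m → ℝ) (d : Fin n → ℝ),
        (∀ i j, Cl i j ≤ C i j ∧ C i j ≤ Cu i j) ∧
        (∀ i, sl i ≤ s i ∧ s i ≤ su i) ∧
        (∀ j, dl j ≤ d j ∧ d j ≤ du j) ∧
        ∑ j, d j ≤ ∑ i, s i ∧ v = optVal C s d}
      (optVal Cl su dl) := by
  refine ⟨⟨Cl, su, dl, fun i j => ⟨le_rfl, hC i j⟩, fun i => ⟨hs i, le_rfl⟩,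
    fun j => ⟨le_rfl, hd j⟩, hfeas, rfl⟩, ?_⟩
  rintro _ ⟨C, s, d, hCm, hsm, hdm, hsd, rfl⟩
  have hfeas_sd : ∃ x, IsPlan s d x :=
    exists_isPlan (fun i => (hsl i).trans (hsm i).1) (fun j => (hdl j).trans (hdm j).1) hsd
  exact optVal_le_optVal hCl (fun i j => (hCm i j).1) (fun i => (hsm i).2) hdl
    (fun j => (hdm j).1) hfeas_sd
end

section
/- Let (C̄, s, d) be a feasible supply-quasi-extreme scenario with free index k (i.e., s_i in {s̲_i, s̄_i} for i != k, d_j in {d̲_j, d̄_j} for all j). Define s'_k = max{ s̲_k, sum_j d_j - sum_{i != k} s_i } and s'_i = s_i for i != k. Then (s', d) is feasible and f(C̄, s, d) <= f(C̄, s', d). -/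
open Finset

/-- Optimal value of the transportation problem with data `(C, s, d)`. -/
lemma exists_plan {m n : ℕ} (s : Fin m → ℝ) (d : Fin n → ℝ)
    (hs : ∀ i, 0 ≤ s i) (hd : ∀ j, 0 ≤ d j) (hfeas : ∑ j, d j ≤ ∑ i, s i) :
    ∃ x, IsPlan s d x := by
  rcases eq_or_lt_of_le (Finset.sum_nonneg fun i _ => hs i) with h0 | hpos
  · refine ⟨fun _ _ => 0, fun i j => le_refl 0, fun i => by simpa using hs i, fun j => ?_⟩
    have hdz : ∑ j, d j = 0 :=
      le_antisymm (h0 ▸ hfeas) (Finset.sum_nonneg fun j _ => hd j)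
    have := (Finset.sum_eq_zero_iff_of_nonneg (fun j _ => hd j)).1 hdz j (mem_univ j)
    simp [this]
  · refine ⟨fun i j => s i * d j / ∑ i, s i,
      fun i j => div_nonneg (mul_nonneg (hs i) (hd j)) hpos.le, fun i => ?_, fun j => ?_⟩
    · rw [← Finset.sum_div, ← Finset.mul_sum]
      rw [div_le_iff₀ hpos]
      exact mul_le_mul_of_nonneg_left hfeas (hs i)
    · rw [← Finset.sum_div, ← Finset.sum_mul, mul_comm,
        mul_div_assoc, div_self (ne_of_gt hpos), mul_one]

/-- For a feasible supply-quasi-extreme scenario with free index `k`, replacing the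
free supply by `max (s̲ k) (∑ d - ∑_{i ≠ k} s i)` keeps the scenario feasible and
weakly increases the optimal value. -/
theorem supply_quasi_extreme_fix_free {m n : ℕ} (Cb : Fin m → Fin n → ℝ)
    (sl su s : Fin m → ℝ) (dl du d : Fin n → ℝ) (k : Fin m)
    (hCb : ∀ i j, 0 ≤ Cb i j)
    (hsl : ∀ i, 0 ≤ sl i) (hdl : ∀ j, 0 ≤ dl j)
    (hsb : ∀ i, sl i ≤ s i ∧ s i ≤ su i)
    (hdb : ∀ j, dl j ≤ d j ∧ d j ≤ du j)
    (hqe : ∀ i, i ≠ k → s i = sl i ∨ s i = su i)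
    (hqed : ∀ j, d j = dl j ∨ d j = du j)
    (hfeas : ∑ j, d j ≤ ∑ i, s i) :
    let s' := Function.update s k
      (max (sl k) (∑ j, d j - ∑ i ∈ Finset.univ.erase k, s i))
    (∀ i, sl i ≤ s' i ∧ s' i ≤ su i) ∧ ∑ j, d j ≤ ∑ i, s' i ∧
      optVal Cb s d ≤ optVal Cb s' d := by
  intro s'
  have hsum : s k + ∑ i ∈ Finset.univ.erase k, s i = ∑ i, s i :=
    Finset.add_sum_erase _ s (mem_univ k)
  have hle2 : ∑ j, d j - ∑ i ∈ Finset.univ.erase k, s i ≤ s k := by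
    have := hfeas
    linarith [hsum]
  have hs'k : s' k = max (sl k) (∑ j, d j - ∑ i ∈ Finset.univ.erase k, s i) := by
    simp [s', Function.update_self]
  have hs'ne : ∀ i, i ≠ k → s' i = s i := fun i hi => Function.update_of_ne hi _ _
  have hs'le : ∀ i, s' i ≤ s i := by
    intro i
    by_cases hi : i = k
    · rw [hi, hs'k]; exact max_le (hsb k).1 hle2
    · rw [hs'ne i hi]
  have hbounds : ∀ i, sl i ≤ s' i ∧ s' i ≤ su i := by
    intro i
    by_cases hi : i = k
    · rw [hi]
      exact ⟨hs'k ▸ le_max_left _ _, (hs'le k).trans (hsb k).2⟩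
    · rw [hs'ne i hi]; exact hsb i
  have hsum' : s' k + ∑ i ∈ Finset.univ.erase k, s' i = ∑ i, s' i :=
    Finset.add_sum_erase _ s' (mem_univ k)
  have herase : ∑ i ∈ Finset.univ.erase k, s' i = ∑ i ∈ Finset.univ.erase k, s i :=
    Finset.sum_congr rfl fun i hi => hs'ne i (Finset.ne_of_mem_erase hi)
  have hfeas' : ∑ j, d j ≤ ∑ i, s' i := by
    have h1 : ∑ j, d j - ∑ i ∈ Finset.univ.erase k, s i ≤ s' k :=
      hs'k ▸ le_max_right _ _
    rw [← hsum', herase]; linarith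
  refine ⟨hbounds, hfeas', ?_⟩
  have hsub : {x | IsPlan s' d x} ⊆ {x | IsPlan s d x} := by
    rintro x ⟨hx0, hxs, hxd⟩
    exact ⟨hx0, fun i => (hxs i).trans (hs'le i), hxd⟩
  have hne : {x | IsPlan s' d x}.Nonempty :=
    exists_plan s' d (fun i => (hsl i).trans (hbounds i).1)
      (fun j => (hdl j).trans (hdb j).1) hfeas'
  refine csInf_le_csInf ?_ (hne.image _) (Set.image_mono hsub)
  refine ⟨0, ?_⟩
  rintro y ⟨x, hx, rfl⟩
  exact Finset.sum_nonneg fun i _ => Finset.sum_nonneg fun j _ =>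
    mul_nonneg (hCb i j) (hx.1 i j)
end

section
/- Let (C̄, s, d) be a feasible demand-quasi-extreme scenario with free index k (i.e., d_j in {d̲_j, d̄_j} for j != k, s_i in {s̲_i, s̄_i} for all i). Define d'_k = min{ d̄_k, sum_i s_i - sum_{j != k} d_j } and d'_j = d_j for j != k. Then (s, d') is feasible and f(C̄, s, d) <= f(C̄, s, d'), assuming C̄ >= 0. -/
/-!
Raising the free demand to `min (d̄ k) (∑ s - ∑_{j ≠ k} d j)` keeps it inside its interval and
within the total supply. The optimal value is monotone in the demand: scaling column `j` of any
plan for the larger demand `d'` by `d j / d' j` gives a plan for `d` that, with nonnegative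
costs, is no more expensive.
-/

open Finset

section Transportation

variable {m n : ℕ}

lemma cost_nonneg {C x : Fin m → Fin n → ℝ} (hC : ∀ i j, 0 ≤ C i j) (hx : ∀ i j, 0 ≤ x i j) :
    0 ≤ cost C x :=
  sum_nonneg fun i _ => sum_nonneg fun j _ => mul_nonneg (hC i j) (hx i j)

lemma exists_isPlan_of_sum_le {s : Fin m → ℝ} {d : Fin n → ℝ} (hs : 0 ≤ s) (hd : 0 ≤ d)
    (h : ∑ j, d j ≤ ∑ i, s i) : ∃ x, IsPlan s d x := by
  set S := ∑ i, s i
  rcases (sum_nonneg fun i _ => hs i : 0 ≤ S).eq_or_lt with hS | hS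
  · have hd0 : ∀ j, d j = 0 := fun j =>
      (sum_eq_zero_iff_of_nonneg fun j _ => hd j).1
        (le_antisymm (hS ▸ h) (sum_nonneg fun j _ => hd j)) j (mem_univ j)
    exact ⟨0, fun _ _ => le_rfl, fun i => by simpa using hs i, fun j => by simp [hd0 j]⟩
  refine ⟨fun i j => s i * d j / S, fun i j => div_nonneg (mul_nonneg (hs i) (hd j)) hS.le,
    fun i => ?_, fun j => ?_⟩
  · calc ∑ j, s i * d j / S = s i * (∑ j, d j) / S := by rw [mul_sum, sum_div]
      _ ≤ s i := div_le_of_le_mul₀ hS.le (hs i) (mul_le_mul_of_nonneg_left h (hs i))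
  · rw [← sum_div, ← sum_mul, mul_div_right_comm, div_self hS.ne', one_mul]

lemma IsPlan.exists_cost_le_of_le {C x' : Fin m → Fin n → ℝ} {s : Fin m → ℝ}
    {d d' : Fin n → ℝ} (hC : ∀ i j, 0 ≤ C i j) (hd : 0 ≤ d) (hdd : d ≤ d')
    (hx' : IsPlan s d' x') : ∃ x, IsPlan s d x ∧ cost C x ≤ cost C x' := by
  obtain ⟨hpos, hrow, hcol⟩ := hx'
  set r : Fin n → ℝ := fun j => d j / d' j
  have hr0 (j) : 0 ≤ r j := div_nonneg (hd j) ((hd j).trans (hdd j))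
  have hr1 (j) : r j ≤ 1 := div_le_one_of_le₀ (hdd j) ((hd j).trans (hdd j))
  -- if `d' j = 0` then also `d j = 0`, so the junk value `d j / 0 = 0` is harmless
  have hrd (j) : r j * d' j = d j := by
    rcases eq_or_ne (d' j) 0 with h | h
    · simp [r, h, le_antisymm ((hdd j).trans h.le) (hd j)]
    · exact div_mul_cancel₀ _ h
  have hscale (i j) : r j * x' i j ≤ x' i j := mul_le_of_le_one_left (hpos i j) (hr1 j)
  refine ⟨fun i j => r j * x' i j,
    ⟨fun i j => mul_nonneg (hr0 j) (hpos i j),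
      fun i => (sum_le_sum fun j _ => hscale i j).trans (hrow i),
      fun j => by rw [← mul_sum, hcol j, hrd j]⟩, ?_⟩
  exact sum_le_sum fun i _ => sum_le_sum fun j _ => mul_le_mul_of_nonneg_left (hscale i j) (hC i j)

lemma optVal_le_cost {C x : Fin m → Fin n → ℝ} {s : Fin m → ℝ} {d : Fin n → ℝ}
    (hC : ∀ i j, 0 ≤ C i j) (hx : IsPlan s d x) : optVal C s d ≤ cost C x :=
  csInf_le ⟨0, by rintro _ ⟨y, hy, rfl⟩; exact cost_nonneg hC hy.1⟩ ⟨x, hx, rfl⟩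

lemma optVal_mono_demand {C : Fin m → Fin n → ℝ} {s : Fin m → ℝ} {d d' : Fin n → ℝ}
    (hC : ∀ i j, 0 ≤ C i j) (hd : 0 ≤ d) (hdd : d ≤ d') (hfeas : ∃ x, IsPlan s d' x) :
    optVal C s d ≤ optVal C s d' := by
  obtain ⟨x₀, hx₀⟩ := hfeas
  refine le_csInf ⟨cost C x₀, x₀, hx₀, rfl⟩ ?_
  rintro _ ⟨x', hx', rfl⟩
  obtain ⟨x, hx, hcost⟩ := hx'.exists_cost_le_of_le hC hd hdd
  exact (optVal_le_cost hC hx).trans hcost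

end Transportation

theorem demand_quasi_extreme_fix_free_general {m n : ℕ} (Cb : Fin m → Fin n → ℝ)
    (sl su s : Fin m → ℝ) (dl du d : Fin n → ℝ) (k : Fin n)
    (hCb : ∀ i j, 0 ≤ Cb i j)
    (hsl : ∀ i, 0 ≤ sl i) (hdl : ∀ j, 0 ≤ dl j)
    (hsb : ∀ i, sl i ≤ s i ∧ s i ≤ su i)
    (hdb : ∀ j, dl j ≤ d j ∧ d j ≤ du j)
    (hfeas : ∑ j, d j ≤ ∑ i, s i) :
    let d' := Function.update d k
      (min (du k) (∑ i, s i - ∑ j ∈ Finset.univ.erase k, d j))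
    (∀ j, dl j ≤ d' j ∧ d' j ≤ du j) ∧ ∑ j, d' j ≤ ∑ i, s i ∧
      optVal Cb s d ≤ optVal Cb s d' := by
  intro d'
  have hsum_d : ∑ j ∈ univ.erase k, d j + d k = ∑ j, d j := sum_erase_add _ _ (mem_univ k)
  have hsum_d' : ∑ j, d' j = min (du k) (∑ i, s i - ∑ j ∈ univ.erase k, d j)
      + ∑ j ∈ univ.erase k, d j := by
    rw [sum_update_of_mem (mem_univ k), sdiff_singleton_eq_erase]
  have hdd' : d ≤ d' := le_update_iff.2 ⟨le_min (hdb k).2 (by linarith), fun _ _ => le_rfl⟩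
  have hd'du : d' ≤ du := update_le_iff.2 ⟨min_le_left _ _, fun j _ => (hdb j).2⟩
  have hfeas' : ∑ j, d' j ≤ ∑ i, s i := by
    linarith [min_le_right (du k) (∑ i, s i - ∑ j ∈ univ.erase k, d j)]
  have hd : 0 ≤ d := fun j => (hdl j).trans (hdb j).1
  have hs : 0 ≤ s := fun i => (hsl i).trans (hsb i).1
  refine ⟨fun j => ⟨(hdb j).1.trans (hdd' j), hd'du j⟩, hfeas', ?_⟩
  exact optVal_mono_demand hCb hd hdd' (exists_isPlan_of_sum_le hs (hd.trans hdd') hfeas')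

/-- For a feasible demand-quasi-extreme scenario with free index `k`, replacing the
free demand by `min (d̄ k) (∑ s - ∑_{j ≠ k} d j)` keeps the scenario feasible and
weakly increases the optimal value (assuming non-negative costs). -/
theorem demand_quasi_extreme_fix_free {m n : ℕ} (Cb : Fin m → Fin n → ℝ)
    (sl su s : Fin m → ℝ) (dl du d : Fin n → ℝ) (k : Fin n)
    (hCb : ∀ i j, 0 ≤ Cb i j)
    (hsl : ∀ i, 0 ≤ sl i) (hdl : ∀ j, 0 ≤ dl j)
    (hsb : ∀ i, sl i ≤ s i ∧ s i ≤ su i)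
    (hdb : ∀ j, dl j ≤ d j ∧ d j ≤ du j)
    (hqe : ∀ j, j ≠ k → d j = dl j ∨ d j = du j)
    (hqes : ∀ i, s i = sl i ∨ s i = su i)
    (hfeas : ∑ j, d j ≤ ∑ i, s i) :
    let d' := Function.update d k
      (min (du k) (∑ i, s i - ∑ j ∈ Finset.univ.erase k, d j))
    (∀ j, dl j ≤ d' j ∧ d' j ≤ du j) ∧ ∑ j, d' j ≤ ∑ i, s i ∧
      optVal Cb s d ≤ optVal Cb s d' :=
  demand_quasi_extreme_fix_free_general Cb sl su s dl du d k hCb hsl hdl hsb hdb hfeas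
end
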